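/- arXiv:2305.09670 — 5 statements merged into one kernel-verified Lean document; each statement's English description precedes it below -/
import Mathlib

section
/- For every real t ≥ 0, the sum Φ(t) = Σ_{n=1}^∞ (4π²n⁴e^{4t} − 6πn²e^{2t}) · e^{−πn²e^{2t}} · e^{t/2} is strictly positive. -/
/-!
With `x = n²e^{2t}` the `n`-th term is `2πx(2πx − 3) e^{−πx} e^{t/2}`, and `x ≥ 1` for `n ≥ 1`, `t ≥ 0`;
since `π > 3` every term is positive. The terms are dominated by `n⁴e^{−an²}` with `a = πe^{2t}`,
so the series converges and its sum is positive.
-/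

open Real

noncomputable def phiTerm (t x : ℝ) : ℝ :=
  (4 * π ^ 2 * x ^ 4 * exp (4 * t) - 6 * π * x ^ 2 * exp (2 * t))
    * exp (-(π * x ^ 2 * exp (2 * t))) * exp (t / 2)

lemma Real.summable_pow_mul_exp_neg_mul_sq (k : ℕ) {a : ℝ} (ha : 0 < a) :
    Summable fun n : ℕ => (n : ℝ) ^ k * exp (-(a * (n : ℝ) ^ 2)) := by
  refine (summable_pow_mul_exp_neg_nat_mul k ha).of_nonneg_of_le (fun _ => by positivity)
    fun n => ?_
  have hn : (n : ℝ) ≤ (n : ℝ) ^ 2 := by exact_mod_cast Nat.le_self_pow two_ne_zero n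
  gcongr
  nlinarith

lemma four_pi_sq_mul_sq_sub_six_pi_mul_pos {x : ℝ} (hx : 1 ≤ x) :
    0 < 4 * π ^ 2 * x ^ 2 - 6 * π * x := by
  have hfactor : 4 * π ^ 2 * x ^ 2 - 6 * π * x = 2 * π * x * (2 * π * x - 3) := by ring
  rw [hfactor]
  have : 0 < 2 * π * x - 3 := by nlinarith [pi_gt_three]
  positivity

lemma phiTerm_eq (t x : ℝ) :
    phiTerm t x = (4 * π ^ 2 * (x ^ 2 * exp (2 * t)) ^ 2 - 6 * π * (x ^ 2 * exp (2 * t)))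
      * exp (-(π * (x ^ 2 * exp (2 * t)))) * exp (t / 2) := by
  have h4 : exp (4 * t) = exp (2 * t) ^ 2 := by rw [← exp_nat_mul]; ring_nf
  simp only [phiTerm, h4, mul_assoc]
  ring

lemma phiTerm_pos {t x : ℝ} (ht : 0 ≤ t) (hx : 1 ≤ x) : 0 < phiTerm t x := by
  have hy : 1 ≤ x ^ 2 * exp (2 * t) :=
    one_le_mul_of_one_le_of_one_le (one_le_pow₀ hx) (one_le_exp (by linarith))
  rw [phiTerm_eq]
  have := four_pi_sq_mul_sq_sub_six_pi_mul_pos hy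
  positivity

lemma summable_phiTerm (t : ℝ) : Summable fun n : ℕ => phiTerm t n := by
  have ha : 0 < π * exp (2 * t) := by positivity
  have hsum := ((summable_pow_mul_exp_neg_mul_sq 4 ha).mul_left
      (4 * π ^ 2 * exp (4 * t) * exp (t / 2))).sub
    ((summable_pow_mul_exp_neg_mul_sq 2 ha).mul_left (6 * π * exp (2 * t) * exp (t / 2)))
  refine hsum.congr fun n => ?_
  simp only [phiTerm]
  ring_nf

/-- For every real `t ≥ 0`, the sum
`Φ(t) = Σ_{n=1}^∞ (4π²n⁴e^{4t} − 6πn²e^{2t}) e^{−πn²e^{2t}} e^{t/2}` is strictly positive. -/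
theorem phi_pos (t : ℝ) (ht : 0 ≤ t) :
    0 < ∑' n : ℕ+, (4 * π ^ 2 * (n : ℝ) ^ 4 * Real.exp (4 * t)
        - 6 * π * (n : ℝ) ^ 2 * Real.exp (2 * t))
      * Real.exp (-(π * (n : ℝ) ^ 2 * Real.exp (2 * t))) * Real.exp (t / 2) := by
  have hn : ∀ n : ℕ+, (1 : ℝ) ≤ n := fun n => by exact_mod_cast (one_le : 1 ≤ n)
  have hsum : Summable fun n : ℕ+ => phiTerm t n :=
    (summable_phiTerm t).comp_injective PNat.coe_injective
  exact hsum.tsum_pos (fun n => (phiTerm_pos ht (hn n)).le) 1 (phiTerm_pos ht (hn 1))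
end

section
/- The derivative A'(y) of A(y) = Σ_{n=1}^∞ n² e^{−n²y}(−4n⁴y² + 15n²y − 15/2) is given by A'(y) = Σ_{n=1}^∞ n⁴ e^{−n²y}(4n⁴y² − 23n²y + 45/2) for y > 0, and A'(y) < 0 for all y ∈ [π, 3.16]. -/
/-!
Writing `t = n²y`, both series are sums of terms `n^k e^{-t} P(t)` with `P` quadratic, and this
family is closed under `d/dy`: the derivative of `n^k e^{-t} (p t² + q t + r)` is
`n^{k+2} e^{-t} (-p t² + (2p - q) t + (q - r))`. For `y` in a compact subset `[a, b]` of `(0, ∞)`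
such a term is at most `C n^{k+4} e^{-a n}`, a summable bound, so the series may be differentiated
termwise.

For `y ∈ [π, 3.16]` the `n = 1` term of `A'` is `e^{-y} (4y² - 23y + 45/2) ≤ -10 e^{-y}`, while the
`n = m + 2` term is at most `e^{-y} · 2 (2/3)^m`, because `n⁸ ≤ 256^{m+1}`, `n²y ≥ y + 9 + 6m`,
`e⁶ > 384` and `e⁹ > 5120`. The tail is therefore at most `6 e^{-y}`.
-/

open Real

noncomputable def quadExpTerm (k : ℕ) (p q r N y : ℝ) : ℝ :=
  N ^ k * exp (-(N ^ 2 * y)) * (p * (N ^ 2 * y) ^ 2 + q * (N ^ 2 * y) + r)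

theorem hasDerivAt_quadExpTerm (k : ℕ) (p q r N y : ℝ) :
    HasDerivAt (quadExpTerm k p q r N) (quadExpTerm (k + 2) (-p) (2 * p - q) (q - r) N y) y := by
  have ht : HasDerivAt (fun z => N ^ 2 * z) (N ^ 2) y := by
    simpa using (hasDerivAt_id y).const_mul (N ^ 2)
  have hexp : HasDerivAt (fun z => exp (-(N ^ 2 * z))) (exp (-(N ^ 2 * y)) * -N ^ 2) y :=
    ht.neg.exp
  have hquad : HasDerivAt (fun z => p * (N ^ 2 * z) ^ 2 + q * (N ^ 2 * z) + r)
      (p * (2 * (N ^ 2 * y) * N ^ 2) + q * N ^ 2) y := by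
    simpa using ((ht.pow 2).const_mul p |>.add (ht.const_mul q)).add_const r
  exact ((hexp.const_mul (N ^ k)).mul hquad).congr_deriv (by simp only [quadExpTerm]; ring)

theorem abs_quadratic_le (p q r : ℝ) {t : ℝ} (ht : 0 ≤ t) :
    |p * t ^ 2 + q * t + r| ≤ (|p| + |q| + |r|) * (t + 1) ^ 2 := by
  have h1 : t ^ 2 ≤ (t + 1) ^ 2 := by nlinarith
  have h2 : t ≤ (t + 1) ^ 2 := by nlinarith
  have h3 : 1 ≤ (t + 1) ^ 2 := by nlinarith
  calc |p * t ^ 2 + q * t + r| ≤ |p| * t ^ 2 + |q| * t + |r| := by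
        refine (abs_add_le _ _).trans (add_le_add_left ((abs_add_le _ _).trans ?_) _)
        rw [abs_mul, abs_mul, abs_of_nonneg ht, abs_of_nonneg (sq_nonneg t)]
    _ ≤ |p| * (t + 1) ^ 2 + |q| * (t + 1) ^ 2 + |r| * (t + 1) ^ 2 := by
        gcongr
        exact le_mul_of_one_le_right (abs_nonneg r) h3
    _ = _ := by ring

theorem summable_pnat_pow_mul_exp_neg_mul (k : ℕ) {a : ℝ} (ha : 0 < a) :
    Summable fun n : ℕ+ => (n : ℝ) ^ k * exp (-a * n) :=
  summable_pnat_iff_summable_nat.2 (Real.summable_pow_mul_exp_neg_nat_mul k ha)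

theorem norm_quadExpTerm_le (k : ℕ) (p q r : ℝ) {N a b x : ℝ} (hN : 1 ≤ N) (ha : 0 ≤ a)
    (hax : a ≤ x) (hxb : x ≤ b) :
    ‖quadExpTerm k p q r N x‖ ≤ (|p| + |q| + |r|) * (b + 1) ^ 2 * (N ^ (k + 4) * exp (-a * N)) := by
  have hN0 : 0 ≤ N := zero_le_one.trans hN
  have hN2 : 1 ≤ N ^ 2 := one_le_pow₀ hN
  have ht : 0 ≤ N ^ 2 * x := mul_nonneg (sq_nonneg N) (ha.trans hax)
  have hexp : exp (-(N ^ 2 * x)) ≤ exp (-a * N) := by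
    rw [neg_mul, exp_le_exp, neg_le_neg_iff]
    calc a * N ≤ a * N ^ 2 := by gcongr; nlinarith
      _ ≤ x * N ^ 2 := by gcongr
      _ = N ^ 2 * x := mul_comm _ _
  have hquad : (N ^ 2 * x + 1) ^ 2 ≤ N ^ 4 * (b + 1) ^ 2 := by
    calc (N ^ 2 * x + 1) ^ 2 ≤ (N ^ 2 * (b + 1)) ^ 2 := by gcongr; nlinarith
      _ = N ^ 4 * (b + 1) ^ 2 := by ring
  rw [quadExpTerm, norm_mul, norm_mul, Real.norm_eq_abs, Real.norm_eq_abs, Real.norm_eq_abs,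
    abs_pow, abs_of_nonneg hN0, abs_of_pos (exp_pos _)]
  calc N ^ k * exp (-(N ^ 2 * x)) * |p * (N ^ 2 * x) ^ 2 + q * (N ^ 2 * x) + r|
      ≤ N ^ k * exp (-a * N) * ((|p| + |q| + |r|) * (N ^ 4 * (b + 1) ^ 2)) := by
        gcongr
        exact (abs_quadratic_le p q r ht).trans (by gcongr)
    _ = _ := by ring

theorem summable_quadExpTerm (k : ℕ) (p q r : ℝ) {y : ℝ} (hy : 0 < y) :
    Summable fun n : ℕ+ => quadExpTerm k p q r n y :=
  .of_norm_bounded ((summable_pnat_pow_mul_exp_neg_mul (k + 4) hy).mul_left _)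
    fun n => norm_quadExpTerm_le k p q r (by exact_mod_cast n.pos) hy.le le_rfl le_rfl

theorem hasDerivAt_tsum_quadExpTerm (k : ℕ) (p q r : ℝ) {y : ℝ} (hy : 0 < y) :
    HasDerivAt (fun z => ∑' n : ℕ+, quadExpTerm k p q r n z)
      (∑' n : ℕ+, quadExpTerm (k + 2) (-p) (2 * p - q) (q - r) n y) y := by
  have hmem : y ∈ Set.Ioo (y / 2) (y + 1) := ⟨half_lt_self hy, lt_add_one y⟩
  exact hasDerivAt_tsum_of_isPreconnected
    ((summable_pnat_pow_mul_exp_neg_mul (k + 2 + 4) (half_pos hy)).mul_left _)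
    isOpen_Ioo isPreconnected_Ioo (fun n x _ => hasDerivAt_quadExpTerm k p q r n x)
    (fun n x hx => norm_quadExpTerm_le (k + 2) _ _ _ (by exact_mod_cast n.pos)
      (half_pos hy).le hx.1.le hx.2.le)
    hmem (summable_quadExpTerm k p q r hy) hmem

theorem two_point_seven_pow_le_exp (n : ℕ) : (2.7 : ℝ) ^ n ≤ exp n := by
  rw [← exp_one_pow]
  exact pow_le_pow_left₀ (by norm_num) (by linarith [exp_one_gt_d9]) n

theorem quadExpTerm_one (k : ℕ) (p q r y : ℝ) :
    quadExpTerm k p q r 1 y = exp (-y) * (p * y ^ 2 + q * y + r) := by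
  simp [quadExpTerm]

theorem quadExpTerm_tail_le (m : ℕ) {y : ℝ} (hy : 3 ≤ y) (hy' : y ≤ 3.16) :
    quadExpTerm 4 4 (-23) (45 / 2) ((m + 2 : ℕ) : ℝ) y ≤ exp (-y) * (2 * (2 / 3) ^ m) := by
  set N : ℝ := ((m + 2 : ℕ) : ℝ) with hN_def
  have hm : (0 : ℝ) ≤ m := m.cast_nonneg
  have hN : N = m + 2 := by rw [hN_def]; push_cast; ring
  have hN8 : N ^ 8 ≤ 256 * 256 ^ m := by
    have h : N ≤ 2 ^ (m + 1) := by
      rw [hN_def]; exact_mod_cast Nat.lt_two_pow_self (n := m + 1)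
    calc N ^ 8 ≤ (2 ^ (m + 1)) ^ 8 := by gcongr
      _ = 256 * 256 ^ m := by rw [← pow_mul, mul_comm, pow_mul, pow_succ']; norm_num
  have hquad : 4 * (N ^ 2 * y) ^ 2 + -23 * (N ^ 2 * y) + 45 / 2 ≤ 40 * N ^ 4 := by
    have ht : 1 ≤ N ^ 2 * y := by rw [hN]; nlinarith
    have hy2 : y ^ 2 ≤ 10 := by nlinarith
    calc 4 * (N ^ 2 * y) ^ 2 + -23 * (N ^ 2 * y) + 45 / 2 ≤ 4 * (N ^ 4 * y ^ 2) := by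
          nlinarith
      _ ≤ 4 * (N ^ 4 * 10) := by gcongr
      _ = 40 * N ^ 4 := by ring
  have hexp : exp (-(N ^ 2 * y)) ≤ exp (-y) * (exp (-9) * exp (-6) ^ m) := by
    rw [← exp_nat_mul, ← exp_add, ← exp_add, exp_le_exp, hN]
    nlinarith [mul_le_mul_of_nonneg_left hy (by positivity : (0 : ℝ) ≤ m ^ 2 + 4 * m + 3)]
  have h6 : 256 * exp (-6) ≤ 2 / 3 := by
    have := two_point_seven_pow_le_exp 6
    rw [exp_neg]; push_cast at this; rw [mul_inv_le_iff₀ (exp_pos _)]; nlinarith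
  have h9 : 10240 * exp (-9) ≤ 2 := by
    have := two_point_seven_pow_le_exp 9
    rw [exp_neg]; push_cast at this; rw [mul_inv_le_iff₀ (exp_pos _)]; nlinarith
  calc quadExpTerm 4 4 (-23) (45 / 2) N y ≤ N ^ 4 * exp (-(N ^ 2 * y)) * (40 * N ^ 4) := by
        rw [quadExpTerm]; gcongr
    _ = 40 * N ^ 8 * exp (-(N ^ 2 * y)) := by ring
    _ ≤ 40 * (256 * 256 ^ m) * (exp (-y) * (exp (-9) * exp (-6) ^ m)) := by gcongr
    _ = exp (-y) * ((10240 * exp (-9)) * (256 * exp (-6)) ^ m) := by ring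
    _ ≤ exp (-y) * (2 * (2 / 3) ^ m) := by gcongr

theorem tsum_quadExpTerm_neg {y : ℝ} (hy : y ∈ Set.Icc π 3.16) :
    ∑' n : ℕ+, quadExpTerm 4 4 (-23) (45 / 2) n y < 0 := by
  obtain ⟨hπ, hy'⟩ := hy
  have hπ' := pi_gt_d4
  have hy3 : 3 ≤ y := by linarith
  set f : ℕ → ℝ := fun n => quadExpTerm 4 4 (-23) (45 / 2) n y
  have hf : Summable fun m => f (m + 1) :=
    summable_pnat_iff_summable_succ.1 (summable_quadExpTerm 4 _ _ _ (by linarith))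
  have hgeom : Summable fun m : ℕ => exp (-y) * (2 * (2 / 3 : ℝ) ^ m) :=
    ((summable_geometric_of_lt_one (by norm_num) (by norm_num)).mul_left 2).mul_left _
  have hhead : f 1 ≤ exp (-y) * (-10) := by
    simp only [f, Nat.cast_one, quadExpTerm_one]
    gcongr
    nlinarith [mul_nonneg (sub_nonneg.2 hπ'.le) (sub_nonneg.2 hy')]
  have htail : ∑' m, f (m + 2) ≤ exp (-y) * 6 := by
    calc ∑' m, f (m + 2) ≤ ∑' m : ℕ, exp (-y) * (2 * (2 / 3) ^ m) :=
          ((summable_nat_add_iff 1).2 hf).tsum_le_tsum (fun m => quadExpTerm_tail_le m hy3 hy')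
            hgeom
      _ = exp (-y) * 6 := by
          rw [tsum_mul_left, tsum_mul_left, tsum_geometric_of_lt_one (by norm_num) (by norm_num)]
          norm_num
  calc ∑' n : ℕ+, f n = f 1 + ∑' m, f (m + 2) := by
        rw [tsum_pnat_eq_tsum_succ, hf.tsum_eq_zero_add]
    _ ≤ exp (-y) * (-10) + exp (-y) * 6 := add_le_add hhead htail
    _ < 0 := by nlinarith [exp_pos (-y)]

/-- The derivative of `A(y) = Σ_{n=1}^∞ n² e^{−n²y}(−4n⁴y² + 15n²y − 15/2)` is
`A'(y) = Σ_{n=1}^∞ n⁴ e^{−n²y}(4n⁴y² − 23n²y + 45/2)` for `y > 0`, and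
`A'(y) < 0` for all `y ∈ [π, 3.16]`. -/
theorem A_deriv (A A' : ℝ → ℝ)
    (hA : ∀ y : ℝ, A y = ∑' n : ℕ+, (n : ℝ) ^ 2 * Real.exp (-((n : ℝ) ^ 2 * y))
        * (-4 * (n : ℝ) ^ 4 * y ^ 2 + 15 * (n : ℝ) ^ 2 * y - 15 / 2))
    (hA' : ∀ y : ℝ, A' y = ∑' n : ℕ+, (n : ℝ) ^ 4 * Real.exp (-((n : ℝ) ^ 2 * y))
        * (4 * (n : ℝ) ^ 4 * y ^ 2 - 23 * (n : ℝ) ^ 2 * y + 45 / 2)) :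
    (∀ y : ℝ, 0 < y → HasDerivAt A (A' y) y) ∧
      (∀ y ∈ Set.Icc π (3.16 : ℝ), A' y < 0) := by
  have hA_eq : A = fun y => ∑' n : ℕ+, quadExpTerm 2 (-4) 15 (-15 / 2) n y :=
    funext fun y => (hA y).trans (tsum_congr fun n => by rw [quadExpTerm]; ring)
  have hA'_eq (y : ℝ) : A' y = ∑' n : ℕ+, quadExpTerm 4 4 (-23) (45 / 2) n y :=
    (hA' y).trans (tsum_congr fun n => by rw [quadExpTerm]; ring)
  refine ⟨fun y hy => ?_, fun y hy => hA'_eq y ▸ tsum_quadExpTerm_neg hy⟩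
  rw [hA_eq, hA'_eq]
  convert hasDerivAt_tsum_quadExpTerm 2 (-4) 15 (-15 / 2) hy using 4 <;> norm_num
end

section
/- A(π) = 0, where A(y) = Σ_{n=1}^∞ n² e^{−n²y}(−4n⁴y² + 15n²y − 15/2). -/
/-!
Put `E(t) = ∑_{n ∈ ℤ} exp (t/4 - π n² eᵗ) = e^{t/4} θ(eᵗ)` with `θ(x) = ∑_{n ∈ ℤ} exp (-π n² x)`.
The transformation formula `θ(x) = x^{-1/2} θ(1/x)` makes `E` even, so `E'(0) = E'''(0) = 0`.
Differentiating termwise, `E⁽ᵏ⁾(t) = ∑ₙ Pₖ(u) exp (t/4 - u)` with `u = π n² eᵗ`, `P₀ = 1` and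
`Pₖ₊₁ = X Pₖ' + (1/4 - X) Pₖ`. Since `4 P₃(u) - P₁(u)/4 = u (-4u² + 15u - 15/2)`, the combination
`4 E'''(0) - E'(0)/4` is `π` times the symmetric sum over `ℤ` of the terms of `A(π)`.
-/

open Real Polynomial

noncomputable def thetaTerm (P : ℝ[X]) (n : ℤ) (t : ℝ) : ℝ :=
  P.eval (π * n ^ 2 * exp t) * exp (t / 4 - π * n ^ 2 * exp t)

noncomputable def thetaDerivPoly (P : ℝ[X]) : ℝ[X] := X * derivative P + (C (1 / 4) - X) * P

theorem hasDerivAt_thetaTerm (P : ℝ[X]) (n : ℤ) (t : ℝ) :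
    HasDerivAt (thetaTerm P n) (thetaTerm (thetaDerivPoly P) n t) t := by
  have hu : HasDerivAt (fun s => π * n ^ 2 * exp s) (π * n ^ 2 * exp t) t :=
    (hasDerivAt_exp t).const_mul _
  have hexp := (((hasDerivAt_id t).div_const 4).sub hu).exp
  refine ((P.hasDerivAt _ |>.comp t hu).mul hexp).congr_deriv ?_
  simp only [thetaTerm, thetaDerivPoly, eval_add, eval_mul, eval_X, eval_sub, eval_C, id,
    Function.comp_apply, Pi.sub_apply]
  ring

theorem norm_eval_le_sum_norm_coeff {𝕜 : Type*} [NormedField 𝕜] (P : 𝕜[X]) {x : 𝕜} {B : ℝ}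
    (hx : ‖x‖ ≤ B) :
    ‖P.eval x‖ ≤ ∑ i ∈ Finset.range (P.natDegree + 1), ‖P.coeff i‖ * B ^ i := by
  rw [eval_eq_sum_range]
  refine (norm_sum_le _ _).trans (Finset.sum_le_sum fun i _ => ?_)
  rw [norm_mul, norm_pow]
  gcongr

noncomputable def thetaMajorant (R : ℝ) (P : ℝ[X]) (n : ℤ) : ℝ :=
  (∑ i ∈ Finset.range (P.natDegree + 1), |P.coeff i| * (π * exp R * n ^ 2) ^ i) *
    exp (R - π * exp (-R) * n ^ 2)

theorem summable_thetaMajorant (R : ℝ) (P : ℝ[X]) : Summable (thetaMajorant R P) := by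
  have h i := (summable_pow_mul_jacobiTheta₂_term_bound 0 (exp_pos (-R)) (2 * i)).mul_left
    (|P.coeff i| * (π * exp R) ^ i * exp R)
  refine (summable_sum (s := Finset.range (P.natDegree + 1)) fun i _ => h i).congr fun n => ?_
  simp only [thetaMajorant, Finset.sum_mul]
  refine Finset.sum_congr rfl fun i _ => ?_
  rw [pow_mul, Int.cast_abs, sq_abs, sub_eq_add_neg R, exp_add]
  ring_nf

theorem abs_thetaTerm_le {R t : ℝ} (ht : |t| ≤ R) (P : ℝ[X]) (n : ℤ) :
    |thetaTerm P n t| ≤ thetaMajorant R P n := by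
  obtain ⟨hRt, htR⟩ := abs_le.mp ht
  have hn : 0 ≤ π * (n : ℝ) ^ 2 := by positivity
  have hu : |π * n ^ 2 * exp t| ≤ π * exp R * n ^ 2 := by
    rw [abs_of_nonneg (by positivity)]
    nlinarith [exp_le_exp.mpr htR]
  have he : exp (t / 4 - π * n ^ 2 * exp t) ≤ exp (R - π * exp (-R) * n ^ 2) := by
    rw [exp_le_exp]
    nlinarith [exp_le_exp.mpr hRt]
  rw [thetaTerm, abs_mul, abs_of_pos (exp_pos _)]
  exact mul_le_mul (norm_eval_le_sum_norm_coeff P hu) he (exp_pos _).le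
    (Finset.sum_nonneg fun i _ => by positivity)

theorem summable_thetaTerm (P : ℝ[X]) (t : ℝ) : Summable (thetaTerm P · t) :=
  (summable_thetaMajorant |t| P).of_norm_bounded fun n => abs_thetaTerm_le le_rfl P n

theorem hasDerivAt_tsum_thetaTerm (P : ℝ[X]) (t : ℝ) :
    HasDerivAt (fun s => ∑' n, thetaTerm P n s) (∑' n, thetaTerm (thetaDerivPoly P) n t) t := by
  have ht : t ∈ Set.Ioo (-(|t| + 1)) (|t| + 1) := abs_lt.mp (lt_add_one _)
  exact hasDerivAt_tsum_of_isPreconnected (summable_thetaMajorant (|t| + 1) (thetaDerivPoly P))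
    isOpen_Ioo isPreconnected_Ioo (fun n s _ => hasDerivAt_thetaTerm P n s)
    (fun n s hs => abs_thetaTerm_le (abs_le.mpr ⟨hs.1.le, hs.2.le⟩) _ n) ht
    (summable_thetaTerm P t) ht

theorem iteratedDeriv_tsum_thetaTerm (P : ℝ[X]) (k : ℕ) :
    iteratedDeriv k (fun t => ∑' n, thetaTerm P n t) =
      fun t => ∑' n, thetaTerm (thetaDerivPoly^[k] P) n t := by
  induction k with
  | zero => rfl
  | succ k ih =>
    ext t
    rw [iteratedDeriv_succ, ih, Function.iterate_succ_apply']
    exact (hasDerivAt_tsum_thetaTerm _ t).deriv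

theorem tsum_thetaTerm_one (t : ℝ) :
    ∑' n, thetaTerm 1 n t = exp (t / 4) * ∑' n : ℤ, exp (-π * exp t * n ^ 2) := by
  rw [← tsum_mul_left]
  refine tsum_congr fun n => ?_
  rw [thetaTerm, eval_one, one_mul, ← exp_add]
  ring_nf

theorem even_tsum_thetaTerm_one : Function.Even fun t => ∑' n, thetaTerm 1 n t := by
  intro t
  dsimp only
  rw [tsum_thetaTerm_one, tsum_thetaTerm_one, tsum_exp_neg_mul_int_sq (exp_pos t), ← exp_mul,
    one_div, ← exp_neg, ← mul_assoc, ← exp_add]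
  congr 1
  · ring_nf
  · simp only [exp_neg, div_eq_mul_inv]

theorem iteratedDeriv_odd_eq_zero_of_even {F : Type*} [NormedAddCommGroup F] [NormedSpace ℝ F]
    {f : ℝ → F} (hf : f.Even) {k : ℕ} (hk : Odd k) : iteratedDeriv k f 0 = 0 := by
  have h := iteratedDeriv_comp_neg k f 0
  rw [show (fun x => f (-x)) = f from funext hf, neg_zero, hk.neg_one_pow, neg_one_smul,
    eq_neg_iff_add_eq_zero, ← two_smul ℝ] at h
  exact (smul_eq_zero.mp h).resolve_left two_ne_zero

theorem eval_thetaDerivPoly_three_sub_one (u : ℝ) :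
    4 * (thetaDerivPoly^[3] 1).eval u - 1 / 4 * (thetaDerivPoly^[1] 1).eval u =
      u * (-4 * u ^ 2 + 15 * u - 15 / 2) := by
  simp only [Function.iterate_succ_apply', Function.iterate_zero_apply, thetaDerivPoly,
    derivative_one, derivative_zero, derivative_mul, derivative_add, derivative_sub,
    derivative_X, derivative_C,
    eval_add, eval_mul, eval_sub, eval_X, eval_C, eval_one, eval_zero]
  ring

theorem tsum_thetaTerm_iterate_eq_zero_of_odd {k : ℕ} (hk : Odd k) :
    ∑' n, thetaTerm (thetaDerivPoly^[k] 1) n 0 = 0 := by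
  rw [← congrFun (iteratedDeriv_tsum_thetaTerm 1 k) 0]
  exact iteratedDeriv_odd_eq_zero_of_even even_tsum_thetaTerm_one hk

theorem thetaTerm_zero (P : ℝ[X]) (n : ℤ) :
    thetaTerm P n 0 = P.eval (π * n ^ 2) * exp (-(π * n ^ 2)) := by
  simp [thetaTerm]

/-- `A(π) = 0`, where `A(y) = Σ_{n=1}^∞ n² e^{−n²y}(−4n⁴y² + 15n²y − 15/2)`. -/
theorem A_pi_eq_zero :
    (∑' n : ℕ+, (n : ℝ) ^ 2 * Real.exp (-((n : ℝ) ^ 2 * π))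
      * (-4 * (n : ℝ) ^ 4 * π ^ 2 + 15 * (n : ℝ) ^ 2 * π - 15 / 2)) = 0 := by
  set a : ℤ → ℝ := fun n => (n : ℝ) ^ 2 * exp (-((n : ℝ) ^ 2 * π))
      * (-4 * (n : ℝ) ^ 4 * π ^ 2 + 15 * (n : ℝ) ^ 2 * π - 15 / 2) with ha_def
  have ha n : π * a n = 4 * thetaTerm (thetaDerivPoly^[3] 1) n 0
      - 1 / 4 * thetaTerm (thetaDerivPoly^[1] 1) n 0 := by
    rw [thetaTerm_zero, thetaTerm_zero, ha_def]
    beta_reduce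
    rw [mul_comm ((n : ℝ) ^ 2) π]
    linear_combination -exp (-(π * n ^ 2)) * eval_thetaDerivPoly_three_sub_one (π * n ^ 2)
  have h3 := (summable_thetaTerm (thetaDerivPoly^[3] 1) 0).mul_left 4
  have h1 := (summable_thetaTerm (thetaDerivPoly^[1] 1) 0).mul_left (1 / 4)
  have ha_summable : Summable a :=
    (summable_mul_left_iff pi_ne_zero).mp ((h3.sub h1).congr fun n => (ha n).symm)
  have hsum : π * ∑' n, a n = 0 := by
    rw [← tsum_mul_left, tsum_congr ha, h3.tsum_sub h1, tsum_mul_left, tsum_mul_left,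
      tsum_thetaTerm_iterate_eq_zero_of_odd (by decide),
      tsum_thetaTerm_iterate_eq_zero_of_odd (by decide)]
    ring
  have ha_even : a.Even := fun n => by
    simp only [ha_def, Int.cast_neg, even_two.neg_pow, (by decide : Even 4).neg_pow]
  rw [tsum_int_eq_zero_add_two_mul_tsum_pnat ha_even ha_summable] at hsum
  simpa [ha_def, pi_ne_zero] using hsum
end

section
/- Σ_{n=1}^∞ e^{−πn²}(1 − 4πn²) = −1/2. -/
/-!
The theta function `θ(τ) = ∑_{n ∈ ℤ} exp(π i n² τ)` satisfies `θ(τ) = (-iτ)^(-1/2) θ(-1/τ)`.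
The point `τ = i` is fixed by `τ ↦ -1/τ`, whose derivative there is `-1`, while the factor
`(-iτ)^(-1/2)` has value `1` and derivative `i/2` there. Differentiating the functional equation
at `i` therefore gives `θ'(i) = (i/4) θ(i)`. Read termwise, this says
`∑_{n ∈ ℤ} e^{-πn²}(1 - 4πn²) = θ(i) + 4i θ'(i) = 0`; the term `n = 0` is `1` and the summand
is even in `n`.
-/

open Real Complex Filter Topology

theorem hasDerivAt_neg_one_div {z : ℂ} (hz : z ≠ 0) :
    HasDerivAt (fun τ : ℂ => -1 / τ) (z ^ 2)⁻¹ z := by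
  have h := (hasDerivAt_inv hz).const_mul (-1 : ℂ)
  rw [neg_one_mul, neg_neg] at h
  simpa only [div_eq_mul_inv] using h

theorem eq_I_div_four_smul_of_hasDerivAt_of_eq_cpow_smul_comp_neg_inv {E : Type*}
    [NormedAddCommGroup E] [NormedSpace ℂ E] {f : ℂ → E} {f' : E} (hf : HasDerivAt f f' I)
    (hfe : ∀ᶠ τ in 𝓝 I, f τ = (-I * τ) ^ (-1 / 2 : ℂ) • f (-1 / τ)) :
    f' = (I / 4) • f I := by
  have hI : -1 / I = I := by rw [div_I]; ring
  have hone : -I * I = 1 := by rw [neg_mul, I_mul_I, neg_neg]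
  have hfactor : HasDerivAt (fun τ : ℂ => (-I * τ) ^ (-1 / 2 : ℂ)) (I / 2) I := by
    have hlin : HasDerivAt (fun τ : ℂ => -I * τ) (-I) I := by
      simpa using (hasDerivAt_id I).const_mul (-I)
    convert hlin.cpow_const (c := (-1 / 2 : ℂ)) (by rw [hone]; exact one_mem_slitPlane) using 1
    rw [hone, one_cpow]
    ring
  have hcomp : HasDerivAt (fun τ => f (-1 / τ)) ((-1 : ℂ) • f') I := by
    have := (hI ▸ hf).scomp I (hasDerivAt_neg_one_div I_ne_zero)
    rwa [I_sq, inv_neg, inv_one] at this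
  have h := hf.unique ((hfactor.smul hcomp).congr_of_eventuallyEq hfe)
  simp only [hone, one_cpow, hI, one_smul, neg_smul] at h
  linear_combination (norm := module) (1 / 2 : ℂ) • h

theorem jacobiTheta_eq_cpow_smul_neg_inv (τ : ℂ) :
    jacobiTheta τ = (-I * τ) ^ (-1 / 2 : ℂ) • jacobiTheta (-1 / τ) := by
  simp [jacobiTheta_eq_jacobiTheta₂, jacobiTheta₂_functional_equation 0 τ, neg_div, cpow_neg]

theorem hasSum_jacobiTheta {τ : ℂ} (hτ : 0 < τ.im) :
    HasSum (fun n : ℤ => cexp (π * I * n ^ 2 * τ)) (jacobiTheta τ) := by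
  simpa [jacobiTheta₂_term, jacobiTheta_eq_jacobiTheta₂] using hasSum_jacobiTheta₂_term 0 hτ

theorem hasSum_deriv_jacobiTheta {τ : ℂ} (hτ : 0 < τ.im) :
    HasSum (fun n : ℤ => π * I * n ^ 2 * cexp (π * I * n ^ 2 * τ)) (deriv jacobiTheta τ) := by
  have hderiv : HasDerivAt jacobiTheta (jacobiTheta₂_fderiv 0 τ (0, 1)) τ := by
    rw [funext jacobiTheta_eq_jacobiTheta₂]
    exact (hasFDerivAt_jacobiTheta₂ 0 hτ).comp_hasDerivAt τ
      ((hasDerivAt_const τ 0).prodMk (hasDerivAt_id τ))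
  rw [hderiv.deriv]
  refine ((hasSum_jacobiTheta₂_term_fderiv 0 hτ).mapL
    (ContinuousLinearMap.apply ℂ ℂ ((0 : ℂ), (1 : ℂ)))).congr_fun fun n => ?_
  simp only [jacobiTheta₂_term_fderiv, ContinuousLinearMap.apply_apply, add_apply, smul_apply,
    ContinuousLinearMap.coe_fst', ContinuousLinearMap.coe_snd', smul_eq_mul]
  ring_nf

theorem deriv_jacobiTheta_I : deriv jacobiTheta I = I / 4 * jacobiTheta I :=
  eq_I_div_four_smul_of_hasDerivAt_of_eq_cpow_smul_comp_neg_inv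
    (differentiableAt_jacobiTheta (by simp)).hasDerivAt
    (.of_forall jacobiTheta_eq_cpow_smul_neg_inv)

theorem hasSum_int_exp_mul_one_sub_four_pi_mul_sq :
    HasSum (fun n : ℤ => rexp (-(π * n ^ 2)) * (1 - 4 * π * n ^ 2)) 0 := by
  have hI : (0 : ℝ) < I.im := by simp
  have hsum := (hasSum_jacobiTheta hI).add ((hasSum_deriv_jacobiTheta hI).mul_left (4 * I))
  have hval : jacobiTheta I + 4 * I * deriv jacobiTheta I = 0 := by
    rw [deriv_jacobiTheta_I]
    linear_combination jacobiTheta I * I_sq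
  rw [← Complex.hasSum_ofReal, ofReal_zero, ← hval]
  refine hsum.congr_fun fun n => ?_
  have hexp : cexp (π * I * n ^ 2 * I) = rexp (-(π * n ^ 2)) := by
    rw [ofReal_exp]
    congr 1
    push_cast
    linear_combination (π * n ^ 2 : ℂ) * I_sq
  rw [ofReal_mul, ← hexp]
  push_cast
  linear_combination -4 * π * n ^ 2 * cexp (π * I * n ^ 2 * I) * I_sq

/-- `Σ_{n=1}^∞ e^{−πn²}(1 − 4πn²) = −1/2`. -/
theorem theta_deriv_sum :
    (∑' n : ℕ+, Real.exp (-(π * (n : ℝ) ^ 2)) * (1 - 4 * π * (n : ℝ) ^ 2)) = -1 / 2 := by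
  have h := tsum_int_eq_zero_add_two_mul_tsum_pnat (fun n => by simp)
    hasSum_int_exp_mul_one_sub_four_pi_mul_sq.summable
  rw [hasSum_int_exp_mul_one_sub_four_pi_mul_sq.tsum_eq] at h
  simp only [Int.cast_natCast, Int.cast_zero, nsmul_eq_mul, Nat.cast_ofNat, ne_eq,
    OfNat.ofNat_ne_zero, not_false_eq_true, zero_pow, mul_zero, neg_zero, Real.exp_zero,
    sub_zero, mul_one] at h
  linarith
end

section
/- The function E_0(t) = Σ_{n=1}^∞ (4π²n⁴e^{4t} − 6πn²e^{2t}) e^{−πn²e^{2t}} e^{t/2} satisfies: there exists C > 0 such that E_0(t) ≤ C e^{−1.5 t} for all t ≥ 0. -/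
open Real

lemma E0_majorant_summable :
    Summable (fun n : ℕ+ => 4 * π ^ 2 * (n : ℝ) ^ 4 * Real.exp (-(π * (n : ℝ) ^ 2))) := by
  have hF : Summable (fun n : ℕ => 4 * π ^ 2 * (n : ℝ) ^ 4 * Real.exp (-(π * (n : ℝ) ^ 2))) := by
    have hG : Summable (fun n : ℕ => (n : ℝ) ^ 4 * Real.exp (-π * n)) :=
      Real.summable_pow_mul_exp_neg_nat_mul 4 Real.pi_pos
    apply Summable.of_nonneg_of_le (fun n => by positivity) _ (hG.mul_left (4 * π ^ 2))
    intro n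
    have hnn : (0 : ℝ) ≤ (n : ℝ) := Nat.cast_nonneg n
    have hle : (n : ℝ) ≤ (n : ℝ) ^ 2 := by
      exact_mod_cast Nat.le_self_pow (by norm_num) n
    have h1 : Real.exp (-(π * (n : ℝ) ^ 2)) ≤ Real.exp (-π * n) := by
      apply Real.exp_le_exp.mpr
      have := mul_le_mul_of_nonneg_left hle Real.pi_pos.le
      linarith
    calc 4 * π ^ 2 * (n : ℝ) ^ 4 * Real.exp (-(π * (n : ℝ) ^ 2))
        ≤ 4 * π ^ 2 * (n : ℝ) ^ 4 * Real.exp (-π * n) :=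
          mul_le_mul_of_nonneg_left h1 (by positivity)
      _ = 4 * π ^ 2 * ((n : ℝ) ^ 4 * Real.exp (-π * n)) := by ring
  exact hF.comp_injective PNat.coe_injective

lemma E0_term_le (n : ℕ+) (t : ℝ) (ht : 0 ≤ t) :
    (4 * π ^ 2 * (n : ℝ) ^ 4 * Real.exp (4 * t)
          - 6 * π * (n : ℝ) ^ 2 * Real.exp (2 * t))
        * Real.exp (-(π * (n : ℝ) ^ 2 * Real.exp (2 * t))) * Real.exp (t / 2)
      ≤ 4 * π ^ 2 * (n : ℝ) ^ 4 * Real.exp (-(π * (n : ℝ) ^ 2)) * Real.exp (-1.5 * t) := by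
  have hn : (1 : ℝ) ≤ (n : ℝ) := by exact_mod_cast n.one_le
  have hn2 : (1 : ℝ) ≤ (n : ℝ) ^ 2 := by nlinarith
  have hπ : (3 : ℝ) < π := Real.pi_gt_three
  have hE : 2 * t + 1 ≤ Real.exp (2 * t) := by
    have := Real.add_one_le_exp (2 * t); linarith
  have hπn : (3 : ℝ) ≤ π * (n : ℝ) ^ 2 := by
    have := mul_le_mul_of_nonneg_left hn2 Real.pi_pos.le
    simp only [mul_one] at this; linarith
  have hpos6 : (0 : ℝ) < π * (n : ℝ) ^ 2 * Real.exp (2 * t) := by positivity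
  have h1 : (4 * π ^ 2 * (n : ℝ) ^ 4 * Real.exp (4 * t)
          - 6 * π * (n : ℝ) ^ 2 * Real.exp (2 * t))
      ≤ 4 * π ^ 2 * (n : ℝ) ^ 4 * Real.exp (4 * t) := by nlinarith [hpos6]
  have hpos : (0 : ℝ) ≤ Real.exp (-(π * (n : ℝ) ^ 2 * Real.exp (2 * t))) * Real.exp (t / 2) :=
    by positivity
  calc (4 * π ^ 2 * (n : ℝ) ^ 4 * Real.exp (4 * t)
          - 6 * π * (n : ℝ) ^ 2 * Real.exp (2 * t))
        * Real.exp (-(π * (n : ℝ) ^ 2 * Real.exp (2 * t))) * Real.exp (t / 2)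
      = (4 * π ^ 2 * (n : ℝ) ^ 4 * Real.exp (4 * t)
          - 6 * π * (n : ℝ) ^ 2 * Real.exp (2 * t))
        * (Real.exp (-(π * (n : ℝ) ^ 2 * Real.exp (2 * t))) * Real.exp (t / 2)) := by ring
    _ ≤ 4 * π ^ 2 * (n : ℝ) ^ 4 * Real.exp (4 * t)
        * (Real.exp (-(π * (n : ℝ) ^ 2 * Real.exp (2 * t))) * Real.exp (t / 2)) :=
        mul_le_mul_of_nonneg_right h1 hpos
    _ = 4 * π ^ 2 * (n : ℝ) ^ 4
        * Real.exp (4 * t + -(π * (n : ℝ) ^ 2 * Real.exp (2 * t)) + t / 2) := by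
        rw [Real.exp_add, Real.exp_add]; ring
    _ ≤ 4 * π ^ 2 * (n : ℝ) ^ 4 * Real.exp (-(π * (n : ℝ) ^ 2) + -1.5 * t) := by
        apply mul_le_mul_of_nonneg_left _ (by positivity)
        apply Real.exp_le_exp.mpr
        have h2 : π * (n : ℝ) ^ 2 * (2 * t) ≤ π * (n : ℝ) ^ 2 * (Real.exp (2 * t) - 1) :=
          mul_le_mul_of_nonneg_left (by linarith) (by positivity)
        have h3 : (3 : ℝ) * (2 * t) ≤ π * (n : ℝ) ^ 2 * (2 * t) :=
          mul_le_mul_of_nonneg_right hπn (by linarith)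
        have key : 6 * t ≤ π * (n : ℝ) ^ 2 * (Real.exp (2 * t) - 1) := by linarith
        nlinarith [key]
    _ = 4 * π ^ 2 * (n : ℝ) ^ 4 * Real.exp (-(π * (n : ℝ) ^ 2)) * Real.exp (-1.5 * t) := by
        rw [Real.exp_add]; ring

lemma E0_term_nonneg (n : ℕ+) (t : ℝ) (ht : 0 ≤ t) :
    0 ≤ (4 * π ^ 2 * (n : ℝ) ^ 4 * Real.exp (4 * t)
          - 6 * π * (n : ℝ) ^ 2 * Real.exp (2 * t))
        * Real.exp (-(π * (n : ℝ) ^ 2 * Real.exp (2 * t))) * Real.exp (t / 2) := by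
  have hn : (1 : ℝ) ≤ (n : ℝ) := by exact_mod_cast n.one_le
  have hn2 : (1 : ℝ) ≤ (n : ℝ) ^ 2 := by nlinarith
  have hn4 : (n : ℝ) ^ 2 ≤ (n : ℝ) ^ 4 := by nlinarith [sq_nonneg ((n : ℝ) ^ 2 - 1)]
  have hπ : (3 : ℝ) < π := Real.pi_gt_three
  have hE : Real.exp (2 * t) ≤ Real.exp (4 * t) := Real.exp_le_exp.mpr (by linarith)
  have s1 : (6 : ℝ) * π ≤ 4 * π ^ 2 := by nlinarith
  have s2 : 6 * π * ((n : ℝ) ^ 2 * Real.exp (2 * t))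
      ≤ 4 * π ^ 2 * ((n : ℝ) ^ 2 * Real.exp (2 * t)) :=
    mul_le_mul_of_nonneg_right s1 (by positivity)
  have s3 : (n : ℝ) ^ 2 * Real.exp (2 * t) ≤ (n : ℝ) ^ 4 * Real.exp (4 * t) :=
    mul_le_mul hn4 hE (Real.exp_nonneg _) (by positivity)
  have s4 : 4 * π ^ 2 * ((n : ℝ) ^ 2 * Real.exp (2 * t))
      ≤ 4 * π ^ 2 * ((n : ℝ) ^ 4 * Real.exp (4 * t)) :=
    mul_le_mul_of_nonneg_left s3 (by positivity)
  have h0 : 0 ≤ 4 * π ^ 2 * (n : ℝ) ^ 4 * Real.exp (4 * t)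
          - 6 * π * (n : ℝ) ^ 2 * Real.exp (2 * t) := by nlinarith [s2, s4]
  positivity

/-- There exists `C > 0` such that
`E₀(t) = Σ_{n=1}^∞ (4π²n⁴e^{4t} − 6πn²e^{2t}) e^{−πn²e^{2t}} e^{t/2} ≤ C e^{−1.5 t}`
for all `t ≥ 0`. -/
theorem E0_exponential_falloff :
    ∃ C : ℝ, 0 < C ∧ ∀ t : ℝ, 0 ≤ t →
      (∑' n : ℕ+, (4 * π ^ 2 * (n : ℝ) ^ 4 * Real.exp (4 * t)
          - 6 * π * (n : ℝ) ^ 2 * Real.exp (2 * t))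
        * Real.exp (-(π * (n : ℝ) ^ 2 * Real.exp (2 * t))) * Real.exp (t / 2))
      ≤ C * Real.exp (-1.5 * t) := by
  set f : ℕ+ → ℝ := fun n => 4 * π ^ 2 * (n : ℝ) ^ 4 * Real.exp (-(π * (n : ℝ) ^ 2)) with hf
  have hfs := E0_majorant_summable
  have hf0 : 0 ≤ ∑' n : ℕ+, f n := tsum_nonneg (fun n => by positivity)
  refine ⟨(∑' n : ℕ+, f n) + 1, by linarith, fun t ht => ?_⟩
  have hmaj : Summable (fun n : ℕ+ => f n * Real.exp (-1.5 * t)) := hfs.mul_right _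
  have hterm : Summable (fun n : ℕ+ =>
      (4 * π ^ 2 * (n : ℝ) ^ 4 * Real.exp (4 * t)
          - 6 * π * (n : ℝ) ^ 2 * Real.exp (2 * t))
        * Real.exp (-(π * (n : ℝ) ^ 2 * Real.exp (2 * t))) * Real.exp (t / 2)) :=
    Summable.of_nonneg_of_le (fun n => E0_term_nonneg n t ht) (fun n => E0_term_le n t ht) hmaj
  calc (∑' n : ℕ+, (4 * π ^ 2 * (n : ℝ) ^ 4 * Real.exp (4 * t)
          - 6 * π * (n : ℝ) ^ 2 * Real.exp (2 * t))
        * Real.exp (-(π * (n : ℝ) ^ 2 * Real.exp (2 * t))) * Real.exp (t / 2))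
      ≤ ∑' n : ℕ+, f n * Real.exp (-1.5 * t) :=
        Summable.tsum_le_tsum (fun n => E0_term_le n t ht) hterm hmaj
    _ = (∑' n : ℕ+, f n) * Real.exp (-1.5 * t) := tsum_mul_right
    _ ≤ ((∑' n : ℕ+, f n) + 1) * Real.exp (-1.5 * t) :=
        mul_le_mul_of_nonneg_right (by linarith) (Real.exp_nonneg _)
end
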